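/- Let ψ1 and ψ2 be modal μ-calculus formulas such that ψ1∨ψ2 is in normal form, let κ : P → Set S be a valuation and s : S a state. Then Player 0 wins the model-checking parity game G(ψ1∨ψ2) from the vertex (ψ1∨ψ2, s) if and only if Player 0 wins G(ψ1) from (ψ1, s) or Player 0 wins G(ψ2) from (ψ2, s). -/

import Mathlib

/-- Formulas of the modal μ-calculus over a type `P` of propositional variables:
`⊥ | ⊤ | p | ¬p | φ∧φ | φ∨φ | □φ | ◇φ | μp.φ | νp.φ`. -/
inductive MuForm (P : Type*) where
  | bot : MuForm P
  | top : MuForm P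
  | var (p : P) : MuForm P
  | nvar (p : P) : MuForm P
  | and (φ ψ : MuForm P) : MuForm P
  | or (φ ψ : MuForm P) : MuForm P
  | box (φ : MuForm P) : MuForm P
  | dia (φ : MuForm P) : MuForm P
  | mu (p : P) (φ : MuForm P) : MuForm P
  | nu (p : P) (φ : MuForm P) : MuForm P
  deriving DecidableEq

variable {P S : Type*}

/-- The set of free variables of a μ-calculus formula (`μp`/`νp` bind `p`). -/
def MuForm.freeVars : MuForm P → Set P
  | .bot => ∅
  | .top => ∅
  | .var p => {p}
  | .nvar p => {p}
  | .and φ ψ => φ.freeVars ∪ ψ.freeVars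
  | .or φ ψ => φ.freeVars ∪ ψ.freeVars
  | .box φ => φ.freeVars
  | .dia φ => φ.freeVars
  | .mu p φ => φ.freeVars \ {p}
  | .nu p φ => φ.freeVars \ {p}

/-- `p` occurs only positively in a μ-calculus formula. -/
def MuForm.PositiveIn (p : P) : MuForm P → Prop
  | .bot => True
  | .top => True
  | .var _ => True
  | .nvar q => q ≠ p
  | .and φ ψ => φ.PositiveIn p ∧ ψ.PositiveIn p
  | .or φ ψ => φ.PositiveIn p ∧ ψ.PositiveIn p
  | .box φ => φ.PositiveIn p
  | .dia φ => φ.PositiveIn p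
  | .mu q φ => q = p ∨ φ.PositiveIn p
  | .nu q φ => q = p ∨ φ.PositiveIn p

/-- Semantics `⟦φ⟧κ ⊆ S` of a μ-calculus formula in the Kripke structure with
state type `S`, transition relation `R`, and valuation `κ : P → Set S`. -/
def MuForm.sem [DecidableEq P] (R : S → S → Prop) : MuForm P → (P → Set S) → Set S
  | .bot, _ => ∅
  | .top, _ => Set.univ
  | .var p, κ => κ p
  | .nvar p, κ => (κ p)ᶜ
  | .and φ ψ, κ => φ.sem R κ ∩ ψ.sem R κ
  | .or φ ψ, κ => φ.sem R κ ∪ ψ.sem R κ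
  | .box φ, κ => {s | ∀ s', R s s' → s' ∈ φ.sem R κ}
  | .dia φ, κ => {s | ∃ s', R s s' ∧ s' ∈ φ.sem R κ}
  | .mu p φ, κ => ⋂₀ {X : Set S | φ.sem R (Function.update κ p X) ⊆ X}
  | .nu p φ, κ => ⋃₀ {X : Set S | X ⊆ φ.sem R (Function.update κ p X)}
variable [DecidableEq P]

/-- The finite set of subformulas of a μ-calculus formula. -/
def MuForm.subformulas : MuForm P → Finset (MuForm P)
  | .bot => {.bot}
  | .top => {.top}
  | .var p => {.var p}
  | .nvar p => {.nvar p}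
  | .and φ ψ => insert (.and φ ψ) (φ.subformulas ∪ ψ.subformulas)
  | .or φ ψ => insert (.or φ ψ) (φ.subformulas ∪ ψ.subformulas)
  | .box φ => insert (.box φ) φ.subformulas
  | .dia φ => insert (.dia φ) φ.subformulas
  | .mu p φ => insert (.mu p φ) φ.subformulas
  | .nu p φ => insert (.nu p φ) φ.subformulas

/-- Size of a formula (used as a termination measure). -/
def MuForm.fsize : MuForm P → ℕ
  | .bot => 1
  | .top => 1
  | .var _ => 1
  | .nvar _ => 1
  | .and φ ψ => φ.fsize + ψ.fsize + 1
  | .or φ ψ => φ.fsize + ψ.fsize + 1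
  | .box φ => φ.fsize + 1
  | .dia φ => φ.fsize + 1
  | .mu _ φ => φ.fsize + 1
  | .nu _ φ => φ.fsize + 1

theorem MuForm.fsize_le_of_mem_subformulas :
    ∀ {φ ψ : MuForm P}, ψ ∈ φ.subformulas → ψ.fsize ≤ φ.fsize := by
  intro φ
  induction φ with
  | bot => intro ψ h; simp [MuForm.subformulas] at h; subst h; exact le_refl _
  | top => intro ψ h; simp [MuForm.subformulas] at h; subst h; exact le_refl _
  | var p => intro ψ h; simp [MuForm.subformulas] at h; subst h; exact le_refl _
  | nvar p => intro ψ h; simp [MuForm.subformulas] at h; subst h; exact le_refl _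
  | and φ₁ φ₂ ih₁ ih₂ =>
      intro ψ h; simp [MuForm.subformulas] at h
      rcases h with h | h | h
      · subst h; exact le_refl _
      · exact le_trans (ih₁ h) (by simp [MuForm.fsize]; omega)
      · exact le_trans (ih₂ h) (by simp [MuForm.fsize]; omega)
  | or φ₁ φ₂ ih₁ ih₂ =>
      intro ψ h; simp [MuForm.subformulas] at h
      rcases h with h | h | h
      · subst h; exact le_refl _
      · exact le_trans (ih₁ h) (by simp [MuForm.fsize]; omega)
      · exact le_trans (ih₂ h) (by simp [MuForm.fsize]; omega)
  | box φ ih =>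
      intro ψ h; simp [MuForm.subformulas] at h
      rcases h with h | h
      · subst h; exact le_refl _
      · exact le_trans (ih h) (by simp [MuForm.fsize])
  | dia φ ih =>
      intro ψ h; simp [MuForm.subformulas] at h
      rcases h with h | h
      · subst h; exact le_refl _
      · exact le_trans (ih h) (by simp [MuForm.fsize])
  | mu p φ ih =>
      intro ψ h; simp [MuForm.subformulas] at h
      rcases h with h | h
      · subst h; exact le_refl _
      · exact le_trans (ih h) (by simp [MuForm.fsize])
  | nu p φ ih =>
      intro ψ h; simp [MuForm.subformulas] at h
      rcases h with h | h
      · subst h; exact le_refl _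
      · exact le_trans (ih h) (by simp [MuForm.fsize])

open Classical in
/-- The alternation depth `α(φ)` of a μ-calculus formula.  For `μp.ψ` it is the
maximum of `{1, α(ψ)}` together with all values `α(νp'.ψ') + 1` for ν-subformulas
`νp'.ψ'` of `ψ` in which `p` occurs free, and dually for `νp.ψ`. -/
noncomputable def MuForm.alt : MuForm P → ℕ
  | .bot => 0
  | .top => 0
  | .var _ => 0
  | .nvar _ => 0
  | .and φ ψ => max φ.alt ψ.alt
  | .or φ ψ => max φ.alt ψ.alt
  | .box φ => φ.alt
  | .dia φ => φ.alt
  | .mu p φ => max (max 1 φ.alt)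
      (φ.subformulas.attach.sup fun ψ =>
        if (∃ p' ψ', ψ.1 = MuForm.nu p' ψ') ∧ p ∈ ψ.1.freeVars then ψ.1.alt + 1 else 0)
  | .nu p φ => max (max 1 φ.alt)
      (φ.subformulas.attach.sup fun ψ =>
        if (∃ p' ψ', ψ.1 = MuForm.mu p' ψ') ∧ p ∈ ψ.1.freeVars then ψ.1.alt + 1 else 0)
termination_by φ => φ.fsize
decreasing_by
  all_goals simp [MuForm.fsize]
  all_goals try omega
  all_goals
    have := MuForm.fsize_le_of_mem_subformulas ψ.2
    omega

/-- A parity game: vertices `V`, each owned by Player `0` or Player `1`,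
an edge relation `E`, and a priority function `prio` with finite range. -/
structure ParityGame (V : Type*) where
  owner : V → Fin 2
  E : V → V → Prop
  prio : V → ℕ
  finRange : (Set.range prio).Finite

namespace ParityGame

variable {V : Type*} (G : ParityGame V)

/-- A dead end: a vertex without `E`-successor. -/
def DeadEnd (v : V) : Prop := ∀ w, ¬ G.E v w

/-- `π : ℕ → V` is an infinite play (all consecutive steps are edges). -/
def InfPlay (π : ℕ → V) : Prop := ∀ i, G.E (π i) (π (i + 1))

/-- The set of priorities occurring infinitely often along an infinite play. -/
def InfOften (π : ℕ → V) : Set ℕ := {c | ∀ N, ∃ n, N ≤ n ∧ G.prio (π n) = c}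

/-- An infinite play is won by Player `0` iff the maximum priority occurring
infinitely often is even (max-parity condition). -/
def WinInf (π : ℕ → V) : Prop := Even (sSup (G.InfOften π))

/-- `l` is a finite play from `v`: a nonempty list starting at `v`, with
consecutive `E`-edges, whose last vertex is a dead end. -/
def FinPlay (v : V) (l : List V) : Prop :=
  l.head? = some v ∧ l.Chain' G.E ∧ ∀ x ∈ l.getLast?, G.DeadEnd x

/-- A finite play is won by Player `0` iff its last vertex belongs to Player `1`. -/
def WinFin (l : List V) : Prop := ∀ x ∈ l.getLast?, G.owner x = 1

/-- A strategy (for Player `0`) is valid if it assigns to every finite nonempty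
`E`-path ending in a Player-`0` vertex that is not a dead end an `E`-successor
of that vertex. -/
def ValidStrat (σ : List V → V) : Prop :=
  ∀ (l : List V) (x : V), l.Chain' G.E → l.getLast? = some x →
    G.owner x = 0 → ¬ G.DeadEnd x → G.E x (σ l)

/-- An infinite play conforms to a strategy `σ` if every step taken from a
Player-`0` vertex follows `σ` applied to the path traversed so far. -/
def ConformsInf (σ : List V → V) (π : ℕ → V) : Prop :=
  ∀ i, G.owner (π i) = 0 → π (i + 1) = σ (List.ofFn fun j : Fin (i + 1) => π j)

/-- A finite play conforms to a strategy `σ` if every step taken from a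
Player-`0` vertex follows `σ` applied to the path traversed so far. -/
def ConformsFin (σ : List V → V) (l : List V) : Prop :=
  ∀ (i : ℕ) (h : i + 1 < l.length),
    G.owner (l.get ⟨i, Nat.lt_of_succ_lt h⟩) = 0 →
    l.get ⟨i + 1, h⟩ = σ (l.take (i + 1))

/-- `σ` is a winning strategy for Player `0` from `v`: it is a valid strategy
and every (infinite or finite) play from `v` conforming to it is won by
Player `0`. -/
def WinningFrom (σ : List V → V) (v : V) : Prop :=
  G.ValidStrat σ ∧
    (∀ π : ℕ → V, π 0 = v → G.InfPlay π → G.ConformsInf σ π → G.WinInf π) ∧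
    (∀ l : List V, G.FinPlay v l → G.ConformsFin σ l → G.WinFin l)

/-- Player `0` wins the game from `v` if some strategy is winning for
Player `0` from `v`. -/
def Wins0 (v : V) : Prop := ∃ σ : List V → V, G.WinningFrom σ v

/-- A strategy is memoryless if its value depends only on the last vertex of
the path. -/
def Memoryless (σ : List V → V) : Prop :=
  ∀ (l l' : List V) (x : V), l.getLast? = some x → l'.getLast? = some x → σ l = σ l'

end ParityGame

theorem MuForm.self_mem_subformulas (φ : MuForm P) : φ ∈ φ.subformulas := by
  cases φ <;> simp [MuForm.subformulas]

/-- `p` is bound in `φ`: some fixpoint subformula of `φ` binds `p`. -/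
def MuForm.BoundIn (p : P) (φ : MuForm P) : Prop :=
  ∃ ψ, MuForm.mu p ψ ∈ φ.subformulas ∨ MuForm.nu p ψ ∈ φ.subformulas

/-- `φ` is in normal form: every variable is bound by at most one fixpoint
operator occurring in `φ` (the fixpoint subformula binding a given variable is
unique), and no variable occurs both free and bound in `φ`. -/
def MuForm.NormalForm (φ : MuForm P) : Prop :=
  (∀ (p : P) (χ₁ χ₂ : MuForm P), χ₁ ∈ φ.subformulas → χ₂ ∈ φ.subformulas →
      (∃ ψ, χ₁ = MuForm.mu p ψ ∨ χ₁ = MuForm.nu p ψ) →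
      (∃ ψ, χ₂ = MuForm.mu p ψ ∨ χ₂ = MuForm.nu p ψ) → χ₁ = χ₂) ∧
    ∀ p ∈ φ.freeVars, ¬ MuForm.BoundIn p φ

/-- The vertices `(ψ, s)` of the model-checking game for `φ` that belong to
Player `0`: `ψ` is `⊥`, a disjunction, a `◇`-formula, a `μ`- or `ν`-formula, a
variable bound in `φ`, a variable `p` free in `φ` with `s ∉ κ p`, or a literal
`¬p` with `s ∈ κ p`. -/
def mcPlayer0 (φ : MuForm P) (κ : P → Set S) : MuForm P × S → Prop :=
  fun v => match v.1 with
  | .bot => True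
  | .top => False
  | .var p => MuForm.BoundIn p φ ∨ (p ∈ φ.freeVars ∧ v.2 ∉ κ p)
  | .nvar p => v.2 ∈ κ p
  | .and _ _ => False
  | .or _ _ => True
  | .box _ => False
  | .dia _ => True
  | .mu _ _ => True
  | .nu _ _ => True

/-- The edges of the model-checking game for `φ`: from `(ψ₁∧ψ₂, s)` and
`(ψ₁∨ψ₂, s)` to `(ψ₁, s)` and `(ψ₂, s)`; from `(□ψ, s)` and `(◇ψ, s)` to
`(ψ, s')` for every `s'` with `R s s'`; from `(μp.ψ, s)` and `(νp.ψ, s)` to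
`(ψ, s)`; from `(p, s)` to `(φ_p, s)` where `φ_p` is the fixpoint subformula of
`φ` binding `p`; no edges from `(⊥, s)`, `(⊤, s)`, `(¬p, s)`, or `(p, s)` with
`p` free in `φ`. -/
def mcEdge (R : S → S → Prop) (φ : MuForm P) :
    MuForm P × S → MuForm P × S → Prop :=
  fun v w => match v.1 with
  | .bot => False
  | .top => False
  | .var p => w.2 = v.2 ∧ w.1 ∈ φ.subformulas ∧
      ∃ ψ, w.1 = MuForm.mu p ψ ∨ w.1 = MuForm.nu p ψ
  | .nvar _ => False
  | .and ψ₁ ψ₂ => w.2 = v.2 ∧ (w.1 = ψ₁ ∨ w.1 = ψ₂)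
  | .or ψ₁ ψ₂ => w.2 = v.2 ∧ (w.1 = ψ₁ ∨ w.1 = ψ₂)
  | .box ψ => w.1 = ψ ∧ R v.2 w.2
  | .dia ψ => w.1 = ψ ∧ R v.2 w.2
  | .mu _ ψ => w.2 = v.2 ∧ w.1 = ψ
  | .nu _ ψ => w.2 = v.2 ∧ w.1 = ψ

/-- The priority of a vertex `(ψ, s)` of the model-checking game:
`2⌈α(ψ)/2⌉ − 1` if `ψ` is a `μ`-formula with `α(ψ) > 0`, `2⌊α(ψ)/2⌋` if `ψ` is
a `ν`-formula with `α(ψ) > 0`, and `0` otherwise. -/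
noncomputable def mcPrio : MuForm P → ℕ
  | .mu p ψ => if 0 < (MuForm.mu p ψ).alt then 2 * (((MuForm.mu p ψ).alt + 1) / 2) - 1 else 0
  | .nu p ψ => if 0 < (MuForm.nu p ψ).alt then 2 * ((MuForm.nu p ψ).alt / 2) else 0
  | _ => 0

open Classical in
/-- The model-checking parity game `G(φ)` for a μ-calculus formula `φ` (in
normal form), a Kripke structure with transition relation `R`, and a valuation
`κ`: its vertices are the pairs `(ψ, s)` with `ψ` a subformula of `φ` and `s`
a state. -/
noncomputable def mcGame (R : S → S → Prop) (φ : MuForm P) (κ : P → Set S) :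
    ParityGame ({ψ : MuForm P // ψ ∈ φ.subformulas} × S) where
  owner := fun v => if mcPlayer0 φ κ (v.1.1, v.2) then 0 else 1
  E := fun v w => mcEdge R φ (v.1.1, v.2) (w.1.1, w.2)
  prio := fun v => mcPrio v.1.1
  finRange := by
    have h : (Set.range fun ψ : {ψ : MuForm P // ψ ∈ φ.subformulas} =>
        mcPrio ψ.1).Finite := Set.finite_range _
    exact h.subset (by rintro _ ⟨v, rfl⟩; exact ⟨v.1, rfl⟩)

theorem MuForm.left_mem_subformulas_or (ψ₁ ψ₂ : MuForm P) :
    ψ₁ ∈ (MuForm.or ψ₁ ψ₂).subformulas := by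
  simp [MuForm.subformulas, MuForm.self_mem_subformulas]

theorem MuForm.right_mem_subformulas_or (ψ₁ ψ₂ : MuForm P) :
    ψ₂ ∈ (MuForm.or ψ₁ ψ₂).subformulas := by
  simp [MuForm.subformulas, MuForm.self_mem_subformulas]

/-! Player 0 owns the vertex `(ψ₁ ∨ ψ₂, s)`, so she wins there iff she wins from one of its two
successors `(ψᵢ, s)`: strategies are converted by prepending or stripping this first move.
Since `ψ₁ ∨ ψ₂` is in normal form, `(θ, t) ↦ (θ, t)` maps `G(ψᵢ)` isomorphically onto the part of
`G(ψ₁ ∨ ψ₂)` on subformulas of `ψᵢ`, and this part is closed under moves: a variable bound in `ψᵢ`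
is bound by the same fixpoint in `ψ₁ ∨ ψ₂`, and a variable free in `ψᵢ` stays free there. Plays
and strategies transfer along such an embedding, so it preserves winning positions. -/

namespace ParityGame

variable {V V' : Type*} (G : ParityGame V)

def Player0Turn (l : List V) (x : V) : Prop :=
  l.IsChain G.E ∧ l.getLast? = some x ∧ G.owner x = 0 ∧ ¬ G.DeadEnd x

variable {G}

theorem ValidStrat.edge {σ : List V → V} (hσ : G.ValidStrat σ) {l : List V} {x : V}
    (h : G.Player0Turn l x) : G.E x (σ l) :=
  hσ l x h.1 h.2.1 h.2.2.1 h.2.2.2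

theorem Player0Turn.cons {l : List V} {x v : V} (h : G.Player0Turn l x)
    (hv : ∀ y ∈ l.head?, G.E v y) :
    G.Player0Turn (v :: l) x := by
  obtain ⟨hl, hx, ho, hd⟩ := h
  have hne : l ≠ [] := by rintro rfl; simp at hx
  exact ⟨hl.cons hv, by rwa [List.getLast?_cons_of_ne_nil hne], ho, hd⟩

theorem player0Turn_ofFn {π : ℕ → V} (hπ : G.InfPlay π) {i : ℕ} (ho : G.owner (π i) = 0) :
    G.Player0Turn (List.ofFn fun j : Fin (i + 1) => π j) (π i) := by
  refine ⟨List.isChain_iff_getElem.mpr fun j hj => ?_, by rw [List.ofFn_succ']; simp, ho,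
    fun hd => hd _ (hπ i)⟩
  simpa only [List.getElem_ofFn] using hπ j

theorem player0Turn_take {l : List V} (hl : l.IsChain G.E) {i : ℕ} (h : i + 1 < l.length)
    (ho : G.owner l[i] = 0) : G.Player0Turn (l.take (i + 1)) l[i] := by
  refine ⟨hl.take _, ?_, ho, fun hd => hd _ (hl.getElem i h)⟩
  simp [List.getLast?_take]

variable (G)

open Classical in
/-- Strategies transported from another game are only meaningful on histories of actual plays;
`validate` patches them elsewhere so that they become valid. -/
noncomputable def validate (σ : List V → V) (l : List V) : V :=
  if h : ∃ w, ∃ x ∈ l.getLast?, G.E x w ∧ ¬ G.E x (σ l) then h.choose else σ l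

variable {G}

theorem validate_eq {σ : List V → V} {l : List V} {x : V} (hx : l.getLast? = some x)
    (h : G.E x (σ l)) : G.validate σ l = σ l := by
  rw [validate, dif_neg]
  rintro ⟨w, y, hy, -, hny⟩
  obtain rfl : y = x := Option.some_injective _ (hy.symm.trans hx)
  exact hny h

theorem validStrat_validate (σ : List V → V) : G.ValidStrat (G.validate σ) := by
  intro l x _ hx _ hd
  by_cases h : G.E x (σ l)
  · rwa [validate_eq hx h]
  · obtain ⟨w, hw⟩ : ∃ w, G.E x w := by simpa [DeadEnd] using hd
    have hex : ∃ w, ∃ y ∈ l.getLast?, G.E y w ∧ ¬ G.E y (σ l) := ⟨w, x, hx, hw, h⟩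
    obtain ⟨y, hy, hyw, -⟩ := hex.choose_spec
    obtain rfl : y = x := Option.some_injective _ (hy.symm.trans hx)
    rw [validate, dif_pos hex]
    exact hyw

theorem winInf_succ_iff {π : ℕ → V} : G.WinInf (fun n => π (n + 1)) ↔ G.WinInf π := by
  suffices G.InfOften (fun n => π (n + 1)) = G.InfOften π by rw [WinInf, WinInf, this]
  ext c
  refine ⟨fun h N => ?_, fun h N => ?_⟩
  · obtain ⟨n, hn, hc⟩ := h N
    exact ⟨n + 1, by omega, hc⟩
  · obtain ⟨n, hn, hc⟩ := h (N + 1)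
    exact ⟨n - 1, by omega, by simpa only [Nat.sub_add_cancel (by omega : 1 ≤ n)]⟩

section Cons

variable {v w : V} {σ τ : List V → V}

theorem conformsInf_iff_succ (hσv : σ [v] = w)
    (hστ : ∀ l x, l.head? = some w → G.Player0Turn l x → σ (v :: l) = τ l)
    {π : ℕ → V} (hπ : G.InfPlay π) (h0 : π 0 = v) (h1 : π 1 = w) :
    G.ConformsInf σ π ↔ G.ConformsInf τ (fun n => π (n + 1)) := by
  have hprefix : ∀ i, (List.ofFn fun j : Fin (i + 2) => π j) =
      v :: List.ofFn fun j : Fin (i + 1) => π (j + 1) := by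
    intro i
    rw [List.ofFn_succ]
    simp [h0]
  have hmove : ∀ i, G.owner (π (i + 1)) = 0 →
      σ (v :: List.ofFn fun j : Fin (i + 1) => π (j + 1)) =
        τ (List.ofFn fun j : Fin (i + 1) => π (j + 1)) :=
    fun i ho => hστ _ _ (by simp [h1]) (player0Turn_ofFn (fun n => hπ (n + 1)) ho)
  constructor
  · intro h i ho
    dsimp only at ho ⊢
    rw [h (i + 1) ho, hprefix, hmove i ho]
  · intro h i ho
    cases i with
    | zero => simp [h1, h0, hσv]
    | succ i =>
      have hstep := h i ho
      dsimp only at hstep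
      rw [hstep, hprefix, hmove i ho]

theorem finPlay_cons_iff (hvw : G.E v w) {l : List V} (hw : l.head? = some w) :
    G.FinPlay v (v :: l) ↔ G.FinPlay w l := by
  have hne : l ≠ [] := by rintro rfl; simp at hw
  constructor
  · rintro ⟨-, hc, hd⟩
    exact ⟨hw, (List.isChain_cons.mp hc).2, by rwa [List.getLast?_cons_of_ne_nil hne] at hd⟩
  · rintro ⟨-, hc, hd⟩
    exact ⟨rfl, List.IsChain.cons hc (by simpa [hw]), by rwa [List.getLast?_cons_of_ne_nil hne]⟩

theorem conformsFin_cons_iff (hσv : σ [v] = w)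
    (hστ : ∀ l x, l.head? = some w → G.Player0Turn l x → σ (v :: l) = τ l)
    {l : List V} (hl : l.IsChain G.E) (hw : l.head? = some w) :
    G.ConformsFin σ (v :: l) ↔ G.ConformsFin τ l := by
  have hmove : ∀ i (hi : i + 1 < l.length), G.owner l[i] = 0 →
      σ (v :: l.take (i + 1)) = τ (l.take (i + 1)) :=
    fun i hi ho =>
      hστ (l.take (i + 1)) l[i] (by simp [List.head?_take, hw]) (player0Turn_take hl hi ho)
  constructor
  · intro h i hi ho
    have := h (i + 1) (by simp; omega) (by simpa using ho)
    simp only [List.get_eq_getElem, List.getElem_cons_succ, List.take_succ_cons] at this ⊢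
    rw [this, hmove i hi (by simpa using ho)]
  · intro h i hi ho
    cases i with
    | zero =>
      cases l with
      | nil => simp at hw
      | cons a l => simp_all
    | succ i =>
      have hi' : i + 1 < l.length := by simpa using hi
      have hstep := h i hi' ho
      simp only [List.get_eq_getElem, List.getElem_cons_succ, List.take_succ_cons] at ho hstep ⊢
      rw [hstep, hmove i hi' ho]

theorem winFin_cons_iff {l : List V} (hne : l ≠ []) : G.WinFin (v :: l) ↔ G.WinFin l := by
  rw [WinFin, WinFin, List.getLast?_cons_of_ne_nil hne]

theorem FinPlay.exists_eq_cons_cons {l : List V} (hl : G.FinPlay v l) (hvw : G.E v w) :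
    ∃ b l', l = v :: b :: l' := by
  obtain ⟨hh, -, hd⟩ := hl
  rcases l with _ | ⟨a, _ | ⟨b, l⟩⟩
  · simp at hh
  · obtain rfl : a = v := by simpa using hh
    exact absurd hvw (hd a rfl w)
  · exact ⟨b, l, by simpa using hh⟩

theorem winningFrom_iff_of_cons (hv : G.owner v = 0) (hvw : G.E v w) (hσv : σ [v] = w)
    (hστ : ∀ l x, l.head? = some w → G.Player0Turn l x → σ (v :: l) = τ l)
    (hσ : G.ValidStrat σ) (hτ : G.ValidStrat τ) :
    G.WinningFrom σ v ↔ G.WinningFrom τ w := by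
  constructor
  · rintro ⟨-, hinf, hfin⟩
    refine ⟨hτ, fun π h0 hπ hc => ?_, fun l hl hc => ?_⟩
    · let π' : ℕ → V := fun | 0 => v | n + 1 => π n
      have hπ' : G.InfPlay π' := fun | 0 => (h0 ▸ hvw : G.E v (π 0)) | n + 1 => hπ n
      exact (winInf_succ_iff (π := π')).mpr
        (hinf π' rfl hπ' ((conformsInf_iff_succ hσv hστ hπ' rfl h0).mpr hc))
    · have hne : l ≠ [] := by rintro rfl; simp [FinPlay] at hl
      exact (winFin_cons_iff hne).mp (hfin _ ((finPlay_cons_iff hvw hl.1).mpr hl)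
        ((conformsFin_cons_iff hσv hστ hl.2.1 hl.1).mpr hc))
  · rintro ⟨-, hinf, hfin⟩
    refine ⟨hσ, fun π h0 hπ hc => ?_, fun l hl hc => ?_⟩
    · have h1 : π 1 = w := by simpa [h0, hσv] using hc 0 (h0 ▸ hv)
      exact (winInf_succ_iff (π := π)).mp (hinf (fun n => π (n + 1)) h1 (fun n => hπ (n + 1))
        ((conformsInf_iff_succ hσv hστ hπ h0 h1).mp hc))
    · obtain ⟨b, l, rfl⟩ := hl.exists_eq_cons_cons hvw
      obtain rfl : b = w := by simpa [hσv] using hc 0 (by simp) (by simpa using hv)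
      have hfp := (finPlay_cons_iff hvw rfl).mp hl
      exact (winFin_cons_iff (List.cons_ne_nil _ _)).mpr
        (hfin _ hfp ((conformsFin_cons_iff hσv hστ hfp.2.1 rfl).mp hc))

end Cons

theorem wins0_iff_exists_edge {v : V} (hv : G.owner v = 0) :
    G.Wins0 v ↔ ∃ w, G.E v w ∧ G.Wins0 w := by
  constructor
  · rintro ⟨σ, hσ⟩
    have hnd : ¬ G.DeadEnd v := fun hd => by
      simpa [WinFin, hv] using
        hσ.2.2 [v] ⟨rfl, List.isChain_singleton v, by simpa using hd⟩ (fun _ h => by simp at h)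
    have hvw : G.E v (σ [v]) := hσ.1 [v] v (List.isChain_singleton v) rfl hv hnd
    have hστ : ∀ l x, l.head? = some (σ [v]) → G.Player0Turn l x →
        σ (v :: l) = G.validate (fun l => σ (v :: l)) l :=
      fun l x hw hl => (validate_eq (σ := fun l => σ (v :: l)) hl.2.1
        (hσ.1.edge (l := v :: l) (hl.cons (by simp [hw, hvw])))).symm
    exact ⟨σ [v], hvw, _,
      (winningFrom_iff_of_cons hv hvw rfl hστ hσ.1 (validStrat_validate _)).mp hσ⟩
  · classical
    rintro ⟨w, hvw, τ, hτ⟩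
    let σ := G.validate (fun l => if l = [v] then w else τ l.tail)
    have hσv : σ [v] = w := by
      show G.validate _ [v] = w
      rw [validate_eq rfl] <;> simp [hvw]
    refine ⟨σ, (winningFrom_iff_of_cons hv hvw hσv ?_ (validStrat_validate _) hτ.1).mpr hτ⟩
    intro l x hw hl
    have hne : l ≠ [] := by rintro rfl; simp at hw
    show G.validate _ (v :: l) = τ l
    rw [validate_eq (x := x) (by rw [List.getLast?_cons_of_ne_nil hne]; exact hl.2.1)] <;>
      simp [hne, hτ.1.edge hl]

structure Embedding (G : ParityGame V) (G' : ParityGame V') where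
  toFun : V → V'
  injective : Function.Injective toFun
  owner_apply : ∀ u, G'.owner (toFun u) = G.owner u
  prio_apply : ∀ u, G'.prio (toFun u) = G.prio u
  edge_iff : ∀ u w, G'.E (toFun u) (toFun w) ↔ G.E u w
  exists_of_edge : ∀ u w', G'.E (toFun u) w' → ∃ w, toFun w = w'

namespace Embedding

variable {G' : ParityGame V'}

instance : CoeFun (G.Embedding G') fun _ => V → V' := ⟨toFun⟩

variable (e : G.Embedding G')

theorem deadEnd_iff (u : V) : G'.DeadEnd (e u) ↔ G.DeadEnd u := by
  refine ⟨fun h w hw => h _ ((e.edge_iff u w).mpr hw), fun h w' hw' => ?_⟩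
  obtain ⟨w, rfl⟩ := e.exists_of_edge u w' hw'
  exact h w ((e.edge_iff u w).mp hw')

theorem isChain_map_iff {l : List V} : (l.map e).IsChain G'.E ↔ l.IsChain G.E := by
  rw [List.isChain_map]
  exact List.IsChain.iff e.edge_iff

theorem player0Turn_map {l : List V} {x : V} (h : G.Player0Turn l x) :
    G'.Player0Turn (l.map e) (e x) :=
  ⟨e.isChain_map_iff.mpr h.1, by simp [h.2.1], by rw [e.owner_apply]; exact h.2.2.1,
    (e.deadEnd_iff x).not.mpr h.2.2.2⟩

theorem exists_comp_eq {π' : ℕ → V'} (hπ' : G'.InfPlay π') {v : V} (h0 : π' 0 = e v) :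
    ∃ π : ℕ → V, e ∘ π = π' := by
  have h : ∀ n, ∃ u, e u = π' n := by
    intro n
    induction n with
    | zero => exact ⟨v, h0.symm⟩
    | succ n ih =>
      obtain ⟨u, hu⟩ := ih
      exact e.exists_of_edge u _ (hu ▸ hπ' n)
  choose π hπ using h
  exact ⟨π, funext hπ⟩

theorem exists_map_eq {l' : List V'} (hl' : l'.IsChain G'.E) {v : V}
    (h0 : l'.head? = some (e v)) : ∃ l : List V, l.map e = l' := by
  induction l' generalizing v with
  | nil => exact ⟨[], rfl⟩
  | cons a l' ih =>
    obtain rfl : a = e v := by simpa using h0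
    obtain ⟨hhead, hl'⟩ := List.isChain_cons.mp hl'
    cases l' with
    | nil => exact ⟨[v], rfl⟩
    | cons b l' =>
      obtain ⟨u, rfl⟩ := e.exists_of_edge v b (hhead _ rfl)
      obtain ⟨l, hl⟩ := ih hl' rfl
      exact ⟨v :: l, by simp [hl]⟩

theorem infPlay_comp_iff {π : ℕ → V} : G'.InfPlay (e ∘ π) ↔ G.InfPlay π :=
  forall_congr' fun _ => e.edge_iff _ _

theorem winInf_comp_iff {π : ℕ → V} : G'.WinInf (e ∘ π) ↔ G.WinInf π := by
  simp only [WinInf, InfOften, Function.comp_apply, e.prio_apply]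

theorem finPlay_map_iff {v : V} {l : List V} : G'.FinPlay (e v) (l.map e) ↔ G.FinPlay v l := by
  unfold FinPlay
  simp only [List.head?_map, List.getLast?_map, Option.map_eq_some_iff, e.injective.eq_iff,
    exists_eq_right]
  refine and_congr_right' (and_congr e.isChain_map_iff ?_)
  simp [e.deadEnd_iff]

variable {σ : List V → V} {σ' : List V' → V'}

theorem conformsInf_comp_iff (hcorr : ∀ l x, G.Player0Turn l x → σ' (l.map e) = e (σ l))
    {π : ℕ → V} (hπ : G.InfPlay π) : G'.ConformsInf σ' (e ∘ π) ↔ G.ConformsInf σ π := by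
  refine forall_congr' fun i => ?_
  simp only [Function.comp_apply, e.owner_apply]
  refine imp_congr_right fun ho => ?_
  have hprefix : (List.ofFn fun j : Fin (i + 1) => e (π j)) =
      (List.ofFn fun j : Fin (i + 1) => π j).map e := by
    rw [List.map_ofFn]
    rfl
  rw [hprefix, hcorr _ _ (player0Turn_ofFn hπ ho), e.injective.eq_iff]

theorem conformsFin_map_iff (hcorr : ∀ l x, G.Player0Turn l x → σ' (l.map e) = e (σ l))
    {l : List V} (hl : l.IsChain G.E) : G'.ConformsFin σ' (l.map e) ↔ G.ConformsFin σ l := by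
  unfold ConformsFin
  simp only [List.length_map, List.get_eq_getElem, List.getElem_map, e.owner_apply,
    ← List.map_take]
  refine forall_congr' fun i => forall_congr' fun hi => imp_congr_right fun ho => ?_
  rw [hcorr _ _ (player0Turn_take hl hi ho), e.injective.eq_iff]

theorem winFin_map_iff {l : List V} : G'.WinFin (l.map e) ↔ G.WinFin l := by
  simp [WinFin, e.owner_apply]

theorem winningFrom_iff (hσ : G.ValidStrat σ) (hσ' : G'.ValidStrat σ')
    (hcorr : ∀ l x, G.Player0Turn l x → σ' (l.map e) = e (σ l)) {v : V} :
    G'.WinningFrom σ' (e v) ↔ G.WinningFrom σ v := by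
  constructor
  · rintro ⟨-, hinf, hfin⟩
    refine ⟨hσ, fun π h0 hπ hc => ?_, fun l hl hc => ?_⟩
    · exact e.winInf_comp_iff.mp (hinf _ (by simp [h0]) (e.infPlay_comp_iff.mpr hπ)
        ((e.conformsInf_comp_iff hcorr hπ).mpr hc))
    · exact e.winFin_map_iff.mp (hfin _ (e.finPlay_map_iff.mpr hl)
        ((e.conformsFin_map_iff hcorr hl.2.1).mpr hc))
  · rintro ⟨-, hinf, hfin⟩
    refine ⟨hσ', fun π' h0 hπ' hc => ?_, fun l' hl' hc => ?_⟩
    · obtain ⟨π, rfl⟩ := e.exists_comp_eq hπ' h0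
      have hπ := e.infPlay_comp_iff.mp hπ'
      exact e.winInf_comp_iff.mpr
        (hinf π (e.injective h0) hπ ((e.conformsInf_comp_iff hcorr hπ).mp hc))
    · obtain ⟨l, rfl⟩ := e.exists_map_eq hl'.2.1 hl'.1
      have hl := e.finPlay_map_iff.mp hl'
      exact e.winFin_map_iff.mpr (hfin l hl ((e.conformsFin_map_iff hcorr hl.2.1).mp hc))

theorem wins0_iff {v : V} : G'.Wins0 (e v) ↔ G.Wins0 v := by
  have : Nonempty V := ⟨v⟩
  have hg : Function.LeftInverse (Function.invFun e) e := Function.leftInverse_invFun e.injective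
  constructor
  · rintro ⟨σ', hσ'⟩
    refine ⟨G.validate fun l => Function.invFun e (σ' (l.map e)),
      (e.winningFrom_iff (validStrat_validate _) hσ'.1 fun l x hl => ?_).mp hσ'⟩
    have hmove := hσ'.1.edge (e.player0Turn_map hl)
    obtain ⟨u, hu⟩ := e.exists_of_edge x _ hmove
    rw [validate_eq hl.2.1 (by rw [← hu, hg, ← e.edge_iff, hu]; exact hmove), ← hu, hg]
  · rintro ⟨σ, hσ⟩
    refine ⟨G'.validate fun l' => e (σ (l'.map (Function.invFun e))),
      (e.winningFrom_iff hσ.1 (validStrat_validate _) fun l x hl => ?_).mpr hσ⟩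
    have hmap : (l.map e).map (Function.invFun e) = l := by simp [hg.comp_eq_id]
    rw [validate_eq (x := e x) (by simp [hl.2.1]) (by rw [hmap, e.edge_iff]; exact hσ.1.edge hl),
      hmap]

end Embedding

end ParityGame

namespace MuForm

theorem subformulas_subset {φ θ : MuForm P} (h : θ ∈ φ.subformulas) :
    θ.subformulas ⊆ φ.subformulas := by
  induction φ <;>
    grind [subformulas, Finset.subset_insert, Finset.subset_union_left, Finset.subset_union_right]

theorem BoundIn.mono {φ χ : MuForm P} {p : P} (hχ : χ ∈ φ.subformulas) (h : χ.BoundIn p) :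
    φ.BoundIn p :=
  let ⟨ψ, hψ⟩ := h
  ⟨ψ, hψ.imp (subformulas_subset hχ ·) (subformulas_subset hχ ·)⟩

theorem mem_freeVars_or_boundIn {χ : MuForm P} {p : P} (h : var p ∈ χ.subformulas) :
    p ∈ χ.freeVars ∨ χ.BoundIn p := by
  induction χ <;> grind [subformulas, freeVars, BoundIn]

theorem mem_subformulas_of_boundIn {φ χ θ : MuForm P} {p : P} (hnf : φ.NormalForm)
    (hχ : χ ∈ φ.subformulas) (hb : χ.BoundIn p) (hθ : θ ∈ φ.subformulas)
    (hθp : ∃ ψ, θ = mu p ψ ∨ θ = nu p ψ) : θ ∈ χ.subformulas := by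
  obtain ⟨ψ, hψ | hψ⟩ := hb
  · rwa [hnf.1 p θ _ hθ (subformulas_subset hχ hψ) hθp ⟨ψ, Or.inl rfl⟩]
  · rwa [hnf.1 p θ _ hθ (subformulas_subset hχ hψ) hθp ⟨ψ, Or.inr rfl⟩]

section NormalForm

variable {φ χ : MuForm P} {p : P}

theorem boundIn_iff_of_mem (hnf : φ.NormalForm) (hχ : χ ∈ φ.subformulas)
    (hfree : χ.freeVars ⊆ φ.freeVars) (hp : var p ∈ χ.subformulas) :
    φ.BoundIn p ↔ χ.BoundIn p := by
  refine ⟨fun hb => ?_, BoundIn.mono hχ⟩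
  exact (mem_freeVars_or_boundIn hp).resolve_left fun hf => hnf.2 p (hfree hf) hb

theorem mem_freeVars_iff_of_mem (hnf : φ.NormalForm) (hχ : χ ∈ φ.subformulas)
    (hfree : χ.freeVars ⊆ φ.freeVars) (hp : var p ∈ χ.subformulas) :
    p ∈ φ.freeVars ↔ p ∈ χ.freeVars := by
  refine ⟨fun hf => ?_, (hfree ·)⟩
  exact (mem_freeVars_or_boundIn hp).resolve_right fun hb => hnf.2 p hf (hb.mono hχ)

end NormalForm

end MuForm

open MuForm

theorem mcEdge_mem_subformulas (R : S → S → Prop) {χ θ : MuForm P} (hθ : θ ∈ χ.subformulas)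
    {t : S} {w : MuForm P × S} (he : mcEdge R χ (θ, t) w) : w.1 ∈ χ.subformulas := by
  cases θ with
  | var p => exact he.2.1
  | _ =>
    refine subformulas_subset hθ ?_
    simp only [mcEdge] at he <;> grind [subformulas, self_mem_subformulas]

section NormalForm

variable {φ χ : MuForm P}

theorem mcPlayer0_iff_of_mem (hnf : φ.NormalForm) (hχ : χ ∈ φ.subformulas)
    (hfree : χ.freeVars ⊆ φ.freeVars) (κ : P → Set S) {θ : MuForm P} (hθ : θ ∈ χ.subformulas)
    (t : S) : mcPlayer0 φ κ (θ, t) ↔ mcPlayer0 χ κ (θ, t) := by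
  cases θ with
  | var p =>
    simp only [mcPlayer0]
    rw [boundIn_iff_of_mem hnf hχ hfree hθ, mem_freeVars_iff_of_mem hnf hχ hfree hθ]
  | _ => rfl

theorem mcEdge_iff_of_mem (R : S → S → Prop) (hnf : φ.NormalForm) (hχ : χ ∈ φ.subformulas)
    (hfree : χ.freeVars ⊆ φ.freeVars) {θ : MuForm P} (hθ : θ ∈ χ.subformulas)
    (t : S) (w : MuForm P × S) : mcEdge R φ (θ, t) w ↔ mcEdge R χ (θ, t) w := by
  cases θ with
  | var p =>
    simp only [mcEdge]
    refine and_congr_right'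
      ⟨fun ⟨hw, hwp⟩ => ⟨?_, hwp⟩, fun ⟨hw, hwp⟩ => ⟨subformulas_subset hχ hw, hwp⟩⟩
    have hb : χ.BoundIn p := (boundIn_iff_of_mem hnf hχ hfree hθ).mp <| by
      obtain ⟨ψ, hψ | hψ⟩ := hwp <;> rw [hψ] at hw
      exacts [⟨ψ, Or.inl hw⟩, ⟨ψ, Or.inr hw⟩]
    exact mem_subformulas_of_boundIn hnf hχ hb hw hwp
  | _ => rfl

end NormalForm

def mcGameEmbedding (R : S → S → Prop) (κ : P → Set S) {φ χ : MuForm P}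
    (hnf : φ.NormalForm) (hχ : χ ∈ φ.subformulas) (hfree : χ.freeVars ⊆ φ.freeVars) :
    (mcGame R χ κ).Embedding (mcGame R φ κ) where
  toFun u := (⟨u.1.1, subformulas_subset hχ u.1.2⟩, u.2)
  injective u w h := by
    simp only [Prod.mk.injEq, Subtype.mk.injEq] at h
    exact Prod.ext (Subtype.ext h.1) h.2
  owner_apply u := by
    classical exact if_congr (mcPlayer0_iff_of_mem hnf hχ hfree κ u.1.2 u.2) rfl rfl
  prio_apply _ := rfl
  edge_iff u w := mcEdge_iff_of_mem R hnf hχ hfree u.1.2 u.2 _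
  exists_of_edge u w' h :=
    have hw' := mcEdge_mem_subformulas R u.1.2 ((mcEdge_iff_of_mem R hnf hχ hfree u.1.2 _ _).mp h)
    ⟨(⟨w'.1.1, hw'⟩, w'.2), rfl⟩

theorem mcGame_wins0_iff_of_mem (R : S → S → Prop) {φ χ : MuForm P} (hnf : φ.NormalForm)
    (hχ : χ ∈ φ.subformulas) (hfree : χ.freeVars ⊆ φ.freeVars) (κ : P → Set S) {θ : MuForm P}
    (hθ : θ ∈ χ.subformulas) (t : S) :
    (mcGame R φ κ).Wins0 (⟨θ, subformulas_subset hχ hθ⟩, t) ↔ (mcGame R χ κ).Wins0 (⟨θ, hθ⟩, t) :=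
  (mcGameEmbedding R κ hnf hχ hfree).wins0_iff (v := (⟨θ, hθ⟩, t))

/-- Player `0` wins the model-checking game `G(ψ₁∨ψ₂)` from `(ψ₁∨ψ₂, s)` iff
Player `0` wins `G(ψ₁)` from `(ψ₁, s)` or Player `0` wins `G(ψ₂)` from
`(ψ₂, s)`. -/
theorem mcGame_or_wins_iff (R : S → S → Prop) (ψ₁ ψ₂ : MuForm P)
    (hnf : (MuForm.or ψ₁ ψ₂).NormalForm) (κ : P → Set S) (s : S) :
    (mcGame R (MuForm.or ψ₁ ψ₂) κ).Wins0
        (⟨MuForm.or ψ₁ ψ₂, (MuForm.or ψ₁ ψ₂).self_mem_subformulas⟩, s) ↔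
      (mcGame R ψ₁ κ).Wins0 (⟨ψ₁, ψ₁.self_mem_subformulas⟩, s) ∨
        (mcGame R ψ₂ κ).Wins0 (⟨ψ₂, ψ₂.self_mem_subformulas⟩, s) := by
  rw [ParityGame.wins0_iff_exists_edge (G := mcGame R (MuForm.or ψ₁ ψ₂) κ)
      (by exact if_pos trivial),
    ← mcGame_wins0_iff_of_mem R hnf (left_mem_subformulas_or ψ₁ ψ₂) Set.subset_union_left,
    ← mcGame_wins0_iff_of_mem R hnf (right_mem_subformulas_or ψ₁ ψ₂) Set.subset_union_right]
  constructor
  · rintro ⟨⟨⟨θ, hθ⟩, t⟩, ⟨ht, hθψ⟩, hw⟩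
    dsimp only at ht hθψ
    subst ht
    rcases hθψ with rfl | rfl
    exacts [Or.inl hw, Or.inr hw]
  · rintro (hw | hw)
    exacts [⟨(⟨ψ₁, _⟩, s), ⟨rfl, Or.inl rfl⟩, hw⟩, ⟨(⟨ψ₂, _⟩, s), ⟨rfl, Or.inr rfl⟩, hw⟩]
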